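/- Let r ≥ 2 and let X_1, X_2 be independent random variables taking values in {0, 1, …, r}, with S_2 = X_1 + X_2. Set w₀ = P(S_2 ≡ 0 (mod r)) = P(S_2 = 0) + P(S_2 = r) + P(S_2 = 2r). Then H(S_2) ≤ w₀·(3/2) + (1 − w₀)·(1 + log₂(r − 1)) + h(w₀). -/

import Mathlib

open MeasureTheory ProbabilityTheory Real

/-- The binary entropy function `h(p) = -p log₂ p - (1-p) log₂ (1-p)`
(with the convention `0 · log₂ 0 = 0`, automatic since `Real.logb 2 0 = 0`). -/
noncomputable def binEnt (p : ℝ) : ℝ :=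
  -(p * Real.logb 2 p) - (1 - p) * Real.logb 2 (1 - p)

/-- The Shannon entropy (in bits) of the Binomial(m, 1/2) distribution,
`H(B_m) = -∑_{k=0}^m C(m,k) 2^{-m} log₂ (C(m,k) 2^{-m})`. -/
noncomputable def HB (m : ℕ) : ℝ :=
  -∑ k ∈ Finset.range (m + 1),
      ((m.choose k : ℝ) * (2 : ℝ) ^ (-(m : ℤ))) *
        Real.logb 2 ((m.choose k : ℝ) * (2 : ℝ) ^ (-(m : ℤ)))

/-- The Shannon entropy (in bits) of an `ℕ`-valued random variable `S` taking
values in `{0, 1, …, N}`:  `H(S) = -∑_{j=0}^N P(S = j) log₂ P(S = j)`. -/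
noncomputable def entS {Ω : Type*} [MeasurableSpace Ω] (μ : Measure Ω)
    (S : Ω → ℕ) (N : ℕ) : ℝ :=
  -∑ j ∈ Finset.range (N + 1),
      (μ {ω | S ω = j}).toReal * Real.logb 2 (μ {ω | S ω = j}).toReal

/-!
Split the support of `S₂` into the block `{0, r, 2r}`, of mass `w₀`, and the remaining `2r - 2`
values. Grouping bounds `H(S₂)` by `h(w₀)` plus `w₀` and `1 - w₀` times the entropies of the two
normalised blocks; the second is at most `log₂ (2r - 2)`. Independence gives
`P(S₂=0) P(S₂=2r) = P(X₁=0) P(X₂=r) · P(X₁=r) P(X₂=0) ≤ P(S₂=r)² / 4` by AM-GM, and a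
three-point distribution `(u, v, w)` with `4uw ≤ v²` has entropy at most `3/2` bits, the entropy
of `Binomial(2, 1/2)`.
-/

open Finset

-- `log x = 4 log s` with `s = x^(1/4)`, and `log s ≥ 1 - 1/s` turns the claim into a polynomial
-- inequality in `s`, valid for `s⁴ ≤ 2`.
lemma sub_one_add_sq_div_four_le_mul_log {x : ℝ} (hx₀ : 0 ≤ x) (hx₂ : x ≤ 2) :
    x - 1 + (x - 1) ^ 2 / 4 ≤ x * log x := by
  rcases hx₀.eq_or_lt with rfl | hx
  · norm_num
  obtain ⟨s, hs, rfl⟩ : ∃ s, 0 < s ∧ s ^ 4 = x :=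
    ⟨x ^ (4⁻¹ : ℝ), rpow_pos_of_pos hx _, by rw [← rpow_natCast, ← rpow_mul hx₀]; norm_num⟩
  calc s ^ 4 - 1 + (s ^ 4 - 1) ^ 2 / 4 ≤ s ^ 4 * (4 * (1 - s⁻¹)) := by
        field_simp
        nlinarith [mul_nonneg (sq_nonneg (s - 1)) hs.le,
          mul_nonneg (mul_nonneg (sq_nonneg (s - 1)) hs.le) hs.le]
    _ ≤ s ^ 4 * (4 * log s) := by gcongr; exact one_sub_inv_le_log_of_pos hs
    _ = s ^ 4 * log (s ^ 4) := by rw [log_pow]; push_cast; ring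

lemma mul_log_two_mul (p : ℝ) : p * log (2 * p) = p * log 2 + p * log p := by
  rcases eq_or_ne p 0 with rfl | hp
  · simp
  · rw [log_mul two_ne_zero hp, mul_add]

lemma binEntropy_le_log_two_sub_sq {p : ℝ} (hp₀ : 0 ≤ p) (hp₁ : p ≤ 1) :
    binEntropy p ≤ log 2 - (2 * p - 1) ^ 2 / 4 := by
  have h₁ := sub_one_add_sq_div_four_le_mul_log (x := 2 * p) (by linarith) (by linarith)
  have h₂ := sub_one_add_sq_div_four_le_mul_log (x := 2 * (1 - p)) (by linarith) (by linarith)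
  rw [mul_assoc, mul_log_two_mul] at h₁ h₂
  rw [binEntropy_eq_negMulLog_add_negMulLog_one_sub, negMulLog, negMulLog]
  nlinarith

lemma negMulLog_le_neg_mul_log_add_sub {p q : ℝ} (hp : 0 ≤ p) (hq : 0 < q) :
    negMulLog p ≤ -(p * log q) + q - p := by
  rcases hp.eq_or_lt with rfl | hp
  · simpa using hq.le
  · have h := mul_le_mul_of_nonneg_left (log_le_sub_one_of_pos (div_pos hq hp)) hp.le
    rw [log_div hq.ne' hp.ne', mul_sub_one, mul_div_cancel₀ _ hp.ne'] at h
    rw [negMulLog]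
    linarith

-- Gibbs' inequality against `Binomial(2, a)`, where `a = u + v / 2` matches the mean, bounds the
-- entropy by `2 h(a) - v log 2`; the constraint forces `(2a - 1)² = (u - w)² ≥ 1 - 2v`.
lemma negMulLog_add_add_le {u v w : ℝ} (hu : 0 ≤ u) (hv : 0 ≤ v) (hw : 0 ≤ w)
    (hsum : u + v + w = 1) (huvw : 4 * (u * w) ≤ v ^ 2) :
    negMulLog u + negMulLog v + negMulLog w ≤ 3 / 2 * log 2 := by
  have hlog2 : 0 < log 2 := log_pos one_lt_two
  set a := u + v / 2 with ha
  rcases (show 0 ≤ a by positivity).eq_or_lt with ha₀ | ha₀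
  · obtain ⟨rfl, rfl⟩ : u = 0 ∧ v = 0 := by constructor <;> linarith
    obtain rfl : w = 1 := by linarith
    simp; positivity
  rcases (show a ≤ 1 by linarith).eq_or_lt with ha₁ | ha₁
  · obtain ⟨rfl, rfl⟩ : w = 0 ∧ v = 0 := by constructor <;> linarith
    obtain rfl : u = 1 := by linarith
    simp; positivity
  have hb : 0 < 1 - a := by linarith
  have gibbs := add_le_add (add_le_add (negMulLog_le_neg_mul_log_add_sub hu (pow_pos ha₀ 2))
    (negMulLog_le_neg_mul_log_add_sub hv (by positivity : 0 < 2 * a * (1 - a))))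
    (negMulLog_le_neg_mul_log_add_sub hw (pow_pos hb 2))
  have cross : -(u * log (a ^ 2)) + a ^ 2 - u + (-(v * log (2 * a * (1 - a))) + 2 * a * (1 - a) - v)
      + (-(w * log ((1 - a) ^ 2)) + (1 - a) ^ 2 - w) = 2 * binEntropy a - v * log 2 := by
    rw [log_pow, log_pow, log_mul (by positivity) hb.ne', log_mul two_ne_zero ha₀.ne',
      binEntropy_eq_negMulLog_add_negMulLog_one_sub, negMulLog, negMulLog]
    have : w = 1 - a - v / 2 := by linarith
    subst this
    ring
  have hent := binEntropy_le_log_two_sub_sq ha₀.le ha₁.le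
  have hsq : 1 - 2 * v ≤ (2 * a - 1) ^ 2 := by nlinarith
  have hlog2_le : log 2 ≤ 1 := by linarith [log_le_sub_one_of_pos two_pos]
  rcases le_total v (1 / 2) with hv₂ | hv₂
  · nlinarith [mul_le_mul_of_nonneg_left hlog2_le (by linarith : (0 : ℝ) ≤ 1 / 2 - v)]
  · nlinarith [sq_nonneg (2 * a - 1)]

lemma negMulLog_add_add_le_of_add_add_eq {u v w W : ℝ} (hu : 0 ≤ u) (hv : 0 ≤ v) (hw : 0 ≤ w)
    (hsum : u + v + w = W) (huvw : 4 * (u * w) ≤ v ^ 2) :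
    negMulLog u + negMulLog v + negMulLog w ≤ W * (3 / 2 * log 2) + negMulLog W := by
  rcases (show 0 ≤ W by linarith).eq_or_lt with rfl | hW
  · obtain ⟨rfl, rfl, rfl⟩ : u = 0 ∧ v = 0 ∧ w = 0 := by refine ⟨?_, ?_, ?_⟩ <;> linarith
    simp
  have key := negMulLog_add_add_le (u := u / W) (v := v / W) (w := w / W) (by positivity)
    (by positivity) (by positivity) (by field_simp; linarith)
    (by rw [div_pow, ← mul_div_mul_comm, ← sq, mul_div_assoc']; gcongr)
  have scale (x : ℝ) : negMulLog x = x / W * negMulLog W + W * negMulLog (x / W) := by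
    rw [← negMulLog_mul, mul_div_cancel₀ _ hW.ne']
  rw [scale u, scale v, scale w]
  have hone : u / W + v / W + w / W = 1 := by field_simp; linarith
  linear_combination mul_le_mul_of_nonneg_left key hW.le + negMulLog W * hone

lemma sum_negMulLog_le {ι : Type*} {s : Finset ι} {p : ι → ℝ} (hp : ∀ i ∈ s, 0 ≤ p i) :
    ∑ i ∈ s, negMulLog (p i) ≤ (∑ i ∈ s, p i) * log #s + negMulLog (∑ i ∈ s, p i) := by
  rcases s.eq_empty_or_nonempty with rfl | hs
  · simp
  have hn : (0 : ℝ) < #s := by exact_mod_cast hs.card_pos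
  have jensen := concaveOn_negMulLog.le_map_sum (t := s) (w := fun _ ↦ (#s : ℝ)⁻¹) (p := p)
    (fun _ _ ↦ by positivity) (by simp [hn.ne']) hp
  simp only [smul_eq_mul, ← mul_sum] at jensen
  rw [mul_comm, negMulLog_mul, negMulLog, log_inv] at jensen
  have := mul_le_mul_of_nonneg_left jensen hn.le
  field_simp at this
  linarith

lemma sum_negMulLog_le_of_subset {ι : Type*} [DecidableEq ι] {s A : Finset ι} {p : ι → ℝ}
    {c : ℝ} (hA : A ⊆ s) (hp : ∀ i ∈ s, 0 ≤ p i) (hs : ∑ i ∈ s, p i = 1)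
    (hAc : ∑ i ∈ A, negMulLog (p i) ≤ (∑ i ∈ A, p i) * c + negMulLog (∑ i ∈ A, p i)) :
    ∑ i ∈ s, negMulLog (p i) ≤ (∑ i ∈ A, p i) * c + (1 - ∑ i ∈ A, p i) * log #(s \ A)
      + binEntropy (∑ i ∈ A, p i) := by
  have hrest : ∑ i ∈ s \ A, p i = 1 - ∑ i ∈ A, p i := by
    rw [← hs, ← sum_sdiff hA, add_sub_cancel_right]
  have := sum_negMulLog_le (s := s \ A) (p := p) (fun i hi ↦ hp i (mem_sdiff.1 hi).1)
  rw [hrest] at this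
  rw [← sum_sdiff hA, binEntropy_eq_negMulLog_add_negMulLog_one_sub]
  linarith

lemma binEnt_eq_binEntropy_div_log_two (p : ℝ) : binEnt p = binEntropy p / log 2 := by
  simp only [binEnt, binEntropy_eq_negMulLog_add_negMulLog_one_sub, negMulLog, logb]
  ring

lemma entS_eq_sum_negMulLog_div_log_two {Ω : Type*} [MeasurableSpace Ω] (μ : Measure Ω)
    (S : Ω → ℕ) (N : ℕ) :
    entS μ S N = (∑ j ∈ range (N + 1), negMulLog (μ.real {ω | S ω = j})) / log 2 := by
  simp only [entS, negMulLog, logb, measureReal_def, sum_div, ← sum_neg_distrib]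
  congr! 1 with j
  ring

lemma sum_measureReal_eq_one {Ω : Type*} [MeasurableSpace Ω] {μ : Measure Ω}
    [IsProbabilityMeasure μ] {S : Ω → ℕ} (hS : Measurable S) {N : ℕ} (hSN : ∀ ω, S ω ≤ N) :
    ∑ j ∈ range (N + 1), μ.real {ω | S ω = j} = 1 := by
  have hcover : S ⁻¹' (range (N + 1) : Set ℕ) = Set.univ :=
    Set.eq_univ_of_forall fun ω ↦ by simpa [Nat.lt_succ_iff] using hSN ω
  rw [← probReal_univ (μ := μ), ← hcover,
    ← sum_measureReal_preimage_singleton _ fun j _ ↦ hS (measurableSet_singleton j)]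
  rfl

lemma four_mul_measureReal_mul_le_measureReal_sq {Ω : Type*} [MeasurableSpace Ω]
    {μ : Measure Ω} [IsFiniteMeasure μ] {X Y : Ω → ℕ} (hX : Measurable X) (hY : Measurable Y)
    (hXY : IndepFun X Y μ) {r : ℕ} (hr : r ≠ 0) (hXr : ∀ ω, X ω ≤ r) (hYr : ∀ ω, Y ω ≤ r) :
    4 * (μ.real {ω | X ω + Y ω = 0} * μ.real {ω | X ω + Y ω = 2 * r}) ≤
      μ.real {ω | X ω + Y ω = r} ^ 2 := by
  have hmul (i j : ℕ) :
      μ.real (X ⁻¹' {i} ∩ Y ⁻¹' {j}) = μ.real (X ⁻¹' {i}) * μ.real (Y ⁻¹' {j}) := by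
    simp only [measureReal_def, ← ENNReal.toReal_mul,
      hXY.measure_inter_preimage_eq_mul _ _ (measurableSet_singleton i) (measurableSet_singleton j)]
  have hzero : {ω | X ω + Y ω = 0} = X ⁻¹' {0} ∩ Y ⁻¹' {0} := by
    ext ω; simp
  have htop : {ω | X ω + Y ω = 2 * r} = X ⁻¹' {r} ∩ Y ⁻¹' {r} := by
    ext ω; have := hXr ω; have := hYr ω; simp; omega
  have hmid : μ.real (X ⁻¹' {0} ∩ Y ⁻¹' {r}) + μ.real (X ⁻¹' {r} ∩ Y ⁻¹' {0}) ≤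
      μ.real {ω | X ω + Y ω = r} := by
    rw [← measureReal_union _ ((hX (measurableSet_singleton r)).inter
      (hY (measurableSet_singleton 0)))]
    · refine measureReal_mono ?_
      rintro ω (⟨h₁, h₂⟩ | ⟨h₁, h₂⟩) <;> simp_all
    · rw [Set.disjoint_left]
      rintro ω ⟨h₁, -⟩ ⟨h₂, -⟩
      simp_all [eq_comm]
  rw [hmul, hmul] at hmid
  rw [hzero, htop, hmul, hmul]
  calc _ = 4 * (μ.real (X ⁻¹' {0}) * μ.real (Y ⁻¹' {r})) *
        (μ.real (X ⁻¹' {r}) * μ.real (Y ⁻¹' {0})) := by ring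
    _ ≤ (μ.real (X ⁻¹' {0}) * μ.real (Y ⁻¹' {r}) + μ.real (X ⁻¹' {r}) * μ.real (Y ⁻¹' {0})) ^ 2 :=
      four_mul_le_sq_add _ _
    _ ≤ _ := by gcongr

lemma sum_insert_zero_pair {M : Type*} [AddCommMonoid M] {r : ℕ} (hr : r ≠ 0) (f : ℕ → M) :
    ∑ j ∈ {0, r, 2 * r}, f j = f 0 + f r + f (2 * r) := by
  rw [sum_insert (by simp; omega), sum_pair (by omega), add_assoc]

lemma insert_zero_pair_subset_range (r : ℕ) : {0, r, 2 * r} ⊆ range (2 * r + 1) := by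
  simp only [insert_subset_iff, singleton_subset_iff, mem_range]
  omega

lemma card_range_sdiff_insert_zero_pair {r : ℕ} (hr : r ≠ 0) :
    #(range (2 * r + 1) \ {0, r, 2 * r}) = 2 * (r - 1) := by
  rw [card_sdiff_of_subset (insert_zero_pair_subset_range r), card_range,
    card_insert_of_notMem (by simp; omega), card_pair (by omega)]
  omega

/-- For `r ≥ 2` and independent `X₁, X₂` with values in `{0, …, r}`,
setting `w₀ = P(S₂ ≡ 0 (mod r)) = P(S₂=0) + P(S₂=r) + P(S₂=2r)`, one has
`H(S₂) ≤ w₀ · (3/2) + (1-w₀)(1 + log₂(r-1)) + h(w₀)`. -/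
theorem entropy_sum_two_upper_bound (r : ℕ) (hr : 2 ≤ r)
    {Ω : Type*} [MeasurableSpace Ω] (μ : Measure Ω) [IsProbabilityMeasure μ]
    (X₁ X₂ : Ω → ℕ) (h₁ : Measurable X₁) (h₂ : Measurable X₂)
    (hind : IndepFun X₁ X₂ μ)
    (hr₁ : ∀ ω, X₁ ω ≤ r) (hr₂ : ∀ ω, X₂ ω ≤ r)
    (w₀ : ℝ)
    (hw₀ : w₀ = (μ {ω | X₁ ω + X₂ ω = 0}).toReal + (μ {ω | X₁ ω + X₂ ω = r}).toReal +
      (μ {ω | X₁ ω + X₂ ω = 2 * r}).toReal) :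
    entS μ (fun ω => X₁ ω + X₂ ω) (2 * r) ≤
      w₀ * (3 / 2) + (1 - w₀) * (1 + Real.logb 2 ((r : ℝ) - 1)) + binEnt w₀ := by
  set p : ℕ → ℝ := fun j ↦ μ.real {ω | X₁ ω + X₂ ω = j}
  have hr₀ : r ≠ 0 := by omega
  have hw : ∑ j ∈ {0, r, 2 * r}, p j = w₀ := by rw [sum_insert_zero_pair hr₀, hw₀]; rfl
  have hthree : ∑ j ∈ {0, r, 2 * r}, negMulLog (p j) ≤
      (∑ j ∈ {0, r, 2 * r}, p j) * (3 / 2 * log 2) + negMulLog (∑ j ∈ {0, r, 2 * r}, p j) := by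
    rw [hw, sum_insert_zero_pair hr₀]
    exact negMulLog_add_add_le_of_add_add_eq measureReal_nonneg measureReal_nonneg
      measureReal_nonneg hw₀.symm
      (four_mul_measureReal_mul_le_measureReal_sq h₁ h₂ hind hr₀ hr₁ hr₂)
  have htotal : ∑ j ∈ range (2 * r + 1), p j = 1 :=
    sum_measureReal_eq_one (S := fun ω ↦ X₁ ω + X₂ ω) (h₁.add h₂) fun ω ↦ by
      have := hr₁ ω; have := hr₂ ω; omega
  have key := sum_negMulLog_le_of_subset (insert_zero_pair_subset_range r)
    (fun j _ ↦ measureReal_nonneg) htotal hthree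
  have hr₁' : (r : ℝ) - 1 ≠ 0 := by
    have : (2 : ℝ) ≤ r := by exact_mod_cast hr
    linarith
  rw [hw, card_range_sdiff_insert_zero_pair hr₀, Nat.cast_mul, Nat.cast_sub (by omega),
    Nat.cast_two, Nat.cast_one, log_mul two_ne_zero hr₁'] at key
  rw [entS_eq_sum_negMulLog_div_log_two, binEnt_eq_binEntropy_div_log_two, logb,
    div_le_iff₀ (log_pos one_lt_two)]
  refine key.trans_eq ?_
  field_simp
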